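/- Let E be a 2-periodic complex of R-modules, r ∈ R, and let C = C(r·id) be the mapping cone of multiplication by r on E. Let χ be an additive invariant with values in an abelian group A. Then χ(H₊(C)) − χ(H₋(C)) = (χ(H₊(E)/r·H₊(E)) − χ({m ∈ H₊(E) : r·m = 0})) − (χ(H₋(E)/r·H₋(E)) − χ({m ∈ H₋(E) : r·m = 0})). (This is the module-level form of the compatibility of the Gysin specialization with the alternating sum of homology, Lemma 2.9.) -/

import Mathlib

/-!
Multiplication by `r` on `E` gives the exact sequence
`H₊E --r--> H₊E → H₊C → H₋E --r--> H₋E`, with maps induced by `x ↦ (x, 0)` and `(x, y) ↦ y`,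
hence a short exact sequence `0 → H₊E/rH₊E → H₊C → H₋E[r] → 0`. The cone of the complex with
the roles of `+` and `-` exchanged is the cone with the same exchange, so `H₋C` fits into
`0 → H₋E/rH₋E → H₋C → H₊E[r] → 0`; apply `χ` to both and subtract.
-/

/-- The homology `ker d₊ / range d₋` of a 2-periodic complex at the `+` spot;
swapping the differentials gives the homology at the `-` spot. -/
abbrev TwoPeriodicHomology {R : Type} [CommRing R] {Ep Em : Type}
    [AddCommGroup Ep] [AddCommGroup Em] [Module R Ep] [Module R Em]
    (dp : Ep →ₗ[R] Em) (dm : Em →ₗ[R] Ep) : Type :=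
  LinearMap.ker dp ⧸ (LinearMap.range dm).comap (LinearMap.ker dp).subtype

section Cone
variable {R : Type} [CommRing R] {Ep Em : Type}
  [AddCommGroup Ep] [AddCommGroup Em] [Module R Ep] [Module R Em]

/-- The even-to-odd differential of the mapping cone of a chain endomorphism
`u = (u₊, u₋)` of a 2-periodic complex: `(x, y) ↦ (d₊x + u₋ y, −d₋ y)`. -/
def coneDp (dp : Ep →ₗ[R] Em) (dm : Em →ₗ[R] Ep) (um : Em →ₗ[R] Em) :
    (Ep × Em) →ₗ[R] (Em × Ep) :=
  LinearMap.prod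
    (dp.comp (LinearMap.fst R Ep Em) + um.comp (LinearMap.snd R Ep Em))
    (-(dm.comp (LinearMap.snd R Ep Em)))

/-- The odd-to-even differential of the mapping cone of a chain endomorphism
`u = (u₊, u₋)` of a 2-periodic complex: `(y, x) ↦ (d₋y + u₊ x, −d₊ x)`. -/
def coneDm (dp : Ep →ₗ[R] Em) (dm : Em →ₗ[R] Ep) (up : Ep →ₗ[R] Ep) :
    (Em × Ep) →ₗ[R] (Ep × Em) :=
  LinearMap.prod
    (dm.comp (LinearMap.fst R Em Ep) + up.comp (LinearMap.snd R Em Ep))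
    (-(dp.comp (LinearMap.snd R Em Ep)))


open LinearMap (ker range)

def IsAdditiveInvariant {A : Type} [AddCommGroup A]
    (χ : (M : Type) → [AddCommGroup M] → [Module R M] → A) : Prop :=
  ∀ (M' M M'' : Type) [AddCommGroup M'] [AddCommGroup M] [AddCommGroup M'']
    [Module R M'] [Module R M] [Module R M''] (f : M' →ₗ[R] M) (g : M →ₗ[R] M''),
    Function.Injective f → Function.Surjective g →
    range f = ker g → χ M = χ M' + χ M''

/-- The exact sequence `M₁ → M₂ → M₃ → M₄ → M₅` cuts out the short exact sequence
`0 → coker a → M₃ → ker d → 0`. -/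
theorem IsAdditiveInvariant.eq_add_of_exact {A : Type} [AddCommGroup A]
    {χ : (M : Type) → [AddCommGroup M] → [Module R M] → A} (hχ : IsAdditiveInvariant χ)
    {M₁ M₂ M₃ M₄ M₅ : Type} [AddCommGroup M₁] [AddCommGroup M₂] [AddCommGroup M₃]
    [AddCommGroup M₄] [AddCommGroup M₅] [Module R M₁] [Module R M₂] [Module R M₃]
    [Module R M₄] [Module R M₅] {a : M₁ →ₗ[R] M₂} {b : M₂ →ₗ[R] M₃} {c : M₃ →ₗ[R] M₄}
    {d : M₄ →ₗ[R] M₅} (hab : Function.Exact a b) (hbc : Function.Exact b c)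
    (hcd : Function.Exact c d) :
    χ M₃ = χ (M₂ ⧸ range a) + χ (ker d) := by
  refine hχ _ _ _ ((range a).liftQ b hab.linearMap_ker_eq.ge)
    (c.codRestrict (ker d) fun x => LinearMap.mem_ker.mpr (hcd.apply_apply_eq_zero x))
    (LinearMap.injective_range_liftQ_of_exact hab) ?_ ?_
  · rintro ⟨y, hy⟩
    obtain ⟨x, rfl⟩ := (hcd y).mp hy
    exact ⟨x, rfl⟩
  · rw [Submodule.range_liftQ, LinearMap.ker_codRestrict, hbc.linearMap_ker_eq]

variable (dp : Ep →ₗ[R] Em) (dm : Em →ₗ[R] Ep)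

lemma coneDp_apply (um : Em →ₗ[R] Em) (z : Ep × Em) :
    coneDp dp dm um z = (dp z.1 + um z.2, -dm z.2) := rfl

lemma coneDm_apply (up : Ep →ₗ[R] Ep) (z : Em × Ep) :
    coneDm dp dm up z = (dm z.1 + up z.2, -dp z.2) := rfl

lemma coneDp_swap (u : Ep →ₗ[R] Ep) : coneDp dm dp u = coneDm dp dm u := rfl

lemma coneDm_swap (u : Em →ₗ[R] Em) : coneDm dm dp u = coneDp dp dm u := rfl

lemma TwoPeriodicHomology.mk_eq_zero {x : ker dp} :
    (Submodule.Quotient.mk x : TwoPeriodicHomology dp dm) = 0 ↔ (x : Ep) ∈ range dm :=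
  Submodule.Quotient.mk_eq_zero _

lemma TwoPeriodicHomology.mk_eq_mk {x x' : ker dp} :
    (Submodule.Quotient.mk x : TwoPeriodicHomology dp dm) = Submodule.Quotient.mk x' ↔
      (x : Ep) - x' ∈ range dm :=
  Submodule.Quotient.eq _

lemma mem_ker_coneDp {um : Em →ₗ[R] Em} {z : Ep × Em} :
    z ∈ ker (coneDp dp dm um) ↔ dp z.1 + um z.2 = 0 ∧ dm z.2 = 0 := by
  simp [coneDp_apply, Prod.ext_iff]

def coneInl (um : Em →ₗ[R] Em) : ker dp →ₗ[R] ker (coneDp dp dm um) :=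
  (LinearMap.inl R Ep Em ∘ₗ (ker dp).subtype).codRestrict _ fun x =>
    (mem_ker_coneDp dp dm).mpr (by simp)

def coneSnd (um : Em →ₗ[R] Em) : ker (coneDp dp dm um) →ₗ[R] ker dm :=
  (LinearMap.snd R Ep Em ∘ₗ (ker _).subtype).codRestrict _ fun z =>
    ((mem_ker_coneDp dp dm).mp z.2).2

@[simp]
lemma coe_coneInl (um : Em →ₗ[R] Em) (x : ker dp) :
    (coneInl dp dm um x : Ep × Em) = ((x : Ep), 0) :=
  rfl

@[simp]
lemma coe_coneSnd (um : Em →ₗ[R] Em) (z : ker (coneDp dp dm um)) :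
    (coneSnd dp dm um z : Em) = (z : Ep × Em).2 :=
  rfl

def homologyToCone (um : Em →ₗ[R] Em) (up : Ep →ₗ[R] Ep) :
    TwoPeriodicHomology dp dm →ₗ[R] TwoPeriodicHomology (coneDp dp dm um) (coneDm dp dm up) :=
  Submodule.mapQ _ _ (coneInl dp dm um) fun _ ⟨y, hy⟩ =>
    ⟨(y, 0), by simp [coneDm_apply, hy]⟩

def coneToHomology (um : Em →ₗ[R] Em) (up : Ep →ₗ[R] Ep) :
    TwoPeriodicHomology (coneDp dp dm um) (coneDm dp dm up) →ₗ[R] TwoPeriodicHomology dm dp :=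
  Submodule.mapQ _ _ (coneSnd dp dm um) fun _ ⟨⟨_, x⟩, hz⟩ =>
    ⟨-x, (map_neg dp x).trans (congrArg Prod.snd hz)⟩

lemma homologyToCone_mk (um : Em →ₗ[R] Em) (up : Ep →ₗ[R] Ep) (x : ker dp) :
    homologyToCone dp dm um up (Submodule.Quotient.mk x) =
      Submodule.Quotient.mk (coneInl dp dm um x) :=
  rfl

variable (r : R)

lemma exact_smul_homologyToCone :
    Function.Exact (r • LinearMap.id : TwoPeriodicHomology dp dm →ₗ[R] _)
      (homologyToCone dp dm (r • LinearMap.id) (r • LinearMap.id)) := by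
  intro h
  induction h using Submodule.Quotient.induction_on with | H x => ?_
  simp only [homologyToCone_mk, TwoPeriodicHomology.mk_eq_zero, Set.mem_range, LinearMap.smul_apply,
    LinearMap.id_apply]
  constructor
  · rintro ⟨⟨y, x'⟩, hyx⟩
    obtain ⟨hx, hx'⟩ : dm y + r • x' = x ∧ dp x' = 0 := by
      simpa [coneDm_apply, Prod.ext_iff] using hyx
    refine ⟨Submodule.Quotient.mk ⟨x', hx'⟩, ?_⟩
    rw [← Submodule.Quotient.mk_smul, TwoPeriodicHomology.mk_eq_mk]
    exact ⟨-y, by simp [← hx]⟩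
  · rintro ⟨h', hh'⟩
    induction h' using Submodule.Quotient.induction_on with | H x' => ?_
    rw [← Submodule.Quotient.mk_smul, eq_comm, TwoPeriodicHomology.mk_eq_mk] at hh'
    obtain ⟨y, hy⟩ := hh'
    exact ⟨(y, x'), by simp [coneDm_apply, hy]⟩

lemma exact_homologyToCone_coneToHomology :
    Function.Exact (homologyToCone dp dm (r • LinearMap.id) (r • LinearMap.id))
      (coneToHomology dp dm (r • LinearMap.id) (r • LinearMap.id)) := by
  refine LinearMap.exact_of_comp_of_mem_range ?_ fun c hc => ?_
  · ext x
    exact (TwoPeriodicHomology.mk_eq_zero dm dp).mpr ⟨0, by simp⟩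
  induction c using Submodule.Quotient.induction_on with | H z => ?_
  obtain ⟨w, hw⟩ := (TwoPeriodicHomology.mk_eq_zero dm dp).mp hc
  obtain ⟨hz, -⟩ := (mem_ker_coneDp dp dm).mp z.2
  have hx : (z : Ep × Em).1 + r • w ∈ ker dp := by
    simpa [hw] using hz
  refine ⟨Submodule.Quotient.mk ⟨_, hx⟩, (TwoPeriodicHomology.mk_eq_mk _ _).mpr ⟨(0, w), ?_⟩⟩
  simp [coneDm_apply, Prod.ext_iff, hw]

lemma exact_coneToHomology_smul :
    Function.Exact (coneToHomology dp dm (r • LinearMap.id) (r • LinearMap.id))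
      (r • LinearMap.id : TwoPeriodicHomology dm dp →ₗ[R] _) := by
  refine LinearMap.exact_of_comp_of_mem_range ?_ fun h hh => ?_
  · ext z
    obtain ⟨hz, -⟩ := (mem_ker_coneDp dp dm).mp z.2
    refine (TwoPeriodicHomology.mk_eq_zero dm dp).mpr ⟨-(z : Ep × Em).1, ?_⟩
    simpa [neg_eq_iff_add_eq_zero] using hz
  induction h using Submodule.Quotient.induction_on with | H y => ?_
  rw [LinearMap.smul_apply, LinearMap.id_apply, ← Submodule.Quotient.mk_smul,
    TwoPeriodicHomology.mk_eq_zero] at hh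
  obtain ⟨w, hw⟩ := hh
  have hz : (-w, (y : Em)) ∈ ker (coneDp dp dm (r • LinearMap.id)) :=
    (mem_ker_coneDp dp dm).mpr (by simp [hw])
  exact ⟨Submodule.Quotient.mk ⟨_, hz⟩, rfl⟩

theorem IsAdditiveInvariant.coneHomology_eq {A : Type} [AddCommGroup A]
    {χ : (M : Type) → [AddCommGroup M] → [Module R M] → A} (hχ : IsAdditiveInvariant χ) :
    χ (TwoPeriodicHomology (coneDp dp dm (r • LinearMap.id)) (coneDm dp dm (r • LinearMap.id))) =
      χ (TwoPeriodicHomology dp dm ⧸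
          range (r • LinearMap.id : TwoPeriodicHomology dp dm →ₗ[R] _)) +
        χ (ker (r • LinearMap.id : TwoPeriodicHomology dm dp →ₗ[R] _)) :=
  hχ.eq_add_of_exact (exact_smul_homologyToCone dp dm r)
    (exact_homologyToCone_coneToHomology dp dm r) (exact_coneToHomology_smul dp dm r)

theorem chi_cone_smul_eq_general
    {A : Type} [AddCommGroup A]
    (χ : (M : Type) → [AddCommGroup M] → [Module R M] → A)
    (hχ : ∀ (M' M M'' : Type) [AddCommGroup M'] [AddCommGroup M] [AddCommGroup M'']
        [Module R M'] [Module R M] [Module R M'']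
        (f : M' →ₗ[R] M) (g : M →ₗ[R] M''),
        Function.Injective f → Function.Surjective g →
        LinearMap.range f = LinearMap.ker g → χ M = χ M' + χ M'')
    (dp : Ep →ₗ[R] Em) (dm : Em →ₗ[R] Ep)
    (r : R) :
    χ (TwoPeriodicHomology
        (coneDp dp dm (r • (LinearMap.id : Em →ₗ[R] Em)))
        (coneDm dp dm (r • (LinearMap.id : Ep →ₗ[R] Ep)))) -
      χ (TwoPeriodicHomology
        (coneDm dp dm (r • (LinearMap.id : Ep →ₗ[R] Ep)))
        (coneDp dp dm (r • (LinearMap.id : Em →ₗ[R] Em)))) =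
    (χ (TwoPeriodicHomology dp dm ⧸
          LinearMap.range (r • (LinearMap.id :
            TwoPeriodicHomology dp dm →ₗ[R] TwoPeriodicHomology dp dm))) -
        χ ↥(LinearMap.ker (r • (LinearMap.id :
            TwoPeriodicHomology dp dm →ₗ[R] TwoPeriodicHomology dp dm)))) -
      (χ (TwoPeriodicHomology dm dp ⧸
          LinearMap.range (r • (LinearMap.id :
            TwoPeriodicHomology dm dp →ₗ[R] TwoPeriodicHomology dm dp))) -
        χ ↥(LinearMap.ker (r • (LinearMap.id :
            TwoPeriodicHomology dm dp →ₗ[R] TwoPeriodicHomology dm dp)))) := by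
  have hχ' : IsAdditiveInvariant χ := hχ
  rw [hχ'.coneHomology_eq dp dm r, ← coneDp_swap dp dm, ← coneDm_swap dp dm, hχ'.coneHomology_eq dm dp r]
  abel

/-- For the mapping cone `C = C(r·id)` of multiplication by `r` on
a 2-periodic complex `E`, and an additive invariant `χ` with values in `A`:
`χ(H₊C) − χ(H₋C) = (χ(H₊E/rH₊E) − χ(r-torsion of H₊E)) − (χ(H₋E/rH₋E) − χ(r-torsion of H₋E))`. -/
theorem chi_cone_smul_eq
    {A : Type} [AddCommGroup A]
    (χ : (M : Type) → [AddCommGroup M] → [Module R M] → A)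
    (hχ : ∀ (M' M M'' : Type) [AddCommGroup M'] [AddCommGroup M] [AddCommGroup M'']
        [Module R M'] [Module R M] [Module R M'']
        (f : M' →ₗ[R] M) (g : M →ₗ[R] M''),
        Function.Injective f → Function.Surjective g →
        LinearMap.range f = LinearMap.ker g → χ M = χ M' + χ M'')
    (dp : Ep →ₗ[R] Em) (dm : Em →ₗ[R] Ep)
    (hc : dm.comp dp = 0) (hc' : dp.comp dm = 0) (r : R) :
    χ (TwoPeriodicHomology
        (coneDp dp dm (r • (LinearMap.id : Em →ₗ[R] Em)))
        (coneDm dp dm (r • (LinearMap.id : Ep →ₗ[R] Ep)))) -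
      χ (TwoPeriodicHomology
        (coneDm dp dm (r • (LinearMap.id : Ep →ₗ[R] Ep)))
        (coneDp dp dm (r • (LinearMap.id : Em →ₗ[R] Em)))) =
    (χ (TwoPeriodicHomology dp dm ⧸
          LinearMap.range (r • (LinearMap.id :
            TwoPeriodicHomology dp dm →ₗ[R] TwoPeriodicHomology dp dm))) -
        χ ↥(LinearMap.ker (r • (LinearMap.id :
            TwoPeriodicHomology dp dm →ₗ[R] TwoPeriodicHomology dp dm)))) -
      (χ (TwoPeriodicHomology dm dp ⧸
          LinearMap.range (r • (LinearMap.id :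
            TwoPeriodicHomology dm dp →ₗ[R] TwoPeriodicHomology dm dp))) -
        χ ↥(LinearMap.ker (r • (LinearMap.id :
            TwoPeriodicHomology dm dp →ₗ[R] TwoPeriodicHomology dm dp)))) :=
  chi_cone_smul_eq_general χ hχ dp dm r

end Cone
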